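/- Derivative of the particle motion with respect to its parameter: let n ∈ ℝ³ be a unit vector, let q = (α, τ) ∈ ℝ × ℝ³ with τ·n = 0, and let x ∈ ℝ³. Then the map s ↦ φ(sq, x) = R_T(sτ)(R_n(sα)x) from ℝ to ℝ³ is differentiable at s = 0 with derivative ∂_s(φ(sq,x))|_{s=0} = (n × τ) × x + α (n × x). -/

import Mathlib

open scoped RealInnerProductSpace

noncomputable section

/-- Euclidean 3-space. -/
abbrev E3 := EuclideanSpace ℝ (Fin 3)

/-- The cross product on `E3`. -/
def cross3 (a b : E3) : E3 :=
  (WithLp.equiv 2 (Fin 3 → ℝ)).symm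
    (crossProduct ((WithLp.equiv 2 (Fin 3 → ℝ)) a) ((WithLp.equiv 2 (Fin 3 → ℝ)) b))

/-- Rotation by angle `α` about the axis spanned by the unit vector `n`:
`R_n(α)x = (n·x)n + cos(α)((n × x) × n) + sin(α)(n × x)`. -/
def Rn (n : E3) (α : ℝ) (x : E3) : E3 :=
  (⟪n, x⟫ : ℝ) • n + Real.cos α • cross3 (cross3 n x) n + Real.sin α • cross3 n x

/- The tangential-translation rotation: for `τ ≠ 0` with `τ·n = 0`, setting
`τ̃ = n × (τ/‖τ‖)`, `R_T(τ)x = (τ̃·x)τ̃ + cos(‖τ‖)((τ̃ × x) × τ̃) + sin(‖τ‖)(τ̃ × x)`;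
and `R_T(0)x = x`. -/
open Classical in
def RT (n : E3) (τ : E3) (x : E3) : E3 :=
  if τ = 0 then x else
    (⟪cross3 n (‖τ‖⁻¹ • τ), x⟫ : ℝ) • cross3 n (‖τ‖⁻¹ • τ)
      + Real.cos ‖τ‖ • cross3 (cross3 (cross3 n (‖τ‖⁻¹ • τ)) x) (cross3 n (‖τ‖⁻¹ • τ))
      + Real.sin ‖τ‖ • cross3 (cross3 n (‖τ‖⁻¹ • τ)) x

/-- The rigid particle motion `φ((α,τ), x) = R_T(τ)(R_n(α)x)`. -/
def phi (n : E3) (p : ℝ × E3) (x : E3) : E3 := RT n p.2 (Rn n p.1 x)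

/-! Both rotations are instances of Rodrigues' formula `rodrigues m θ`. For a unit axis `m`,
`rodrigues m 0` is the identity and its `θ`-derivative at `0` is `y ↦ m × y`, so by the product
rule `s ↦ rodrigues m (s ω) (y s)` has derivative `ω (m × y 0) + y' 0` at `0`. Since `τ ⊥ n`,
the axis `τ̃ = tangentAxis n τ` is a unit vector and `R_T(sτ) = rodrigues τ̃ (s ‖τ‖)` for every
real `s`; applying the derivative formula twice gives
`‖τ‖ (τ̃ × x) + α (n × x) = (n × τ) × x + α (n × x)`. -/

lemma cross3_add_left (a b c : E3) : cross3 (a + b) c = cross3 a c + cross3 b c := by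
  simp [cross3]

lemma cross3_add_right (a b c : E3) : cross3 a (b + c) = cross3 a b + cross3 a c := by
  simp [cross3]

lemma cross3_smul_left (s : ℝ) (a b : E3) : cross3 (s • a) b = s • cross3 a b := by
  simp [cross3]

lemma cross3_smul_right (s : ℝ) (a b : E3) : cross3 a (s • b) = s • cross3 a b := by
  simp [cross3]

lemma cross3_zero_left (a : E3) : cross3 0 a = 0 := by simp [cross3]

lemma cross3_zero_right (a : E3) : cross3 a 0 = 0 := by simp [cross3]

lemma cross3_neg_left (a b : E3) : cross3 (-a) b = -cross3 a b := by
  simpa using cross3_smul_left (-1) a b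

lemma cross3_neg_right (a b : E3) : cross3 a (-b) = -cross3 a b := by
  simpa using cross3_smul_right (-1) a b

lemma cross3_cross3_self (u y : E3) :
    cross3 (cross3 u y) u = ⟪u, u⟫ • y - ⟪u, y⟫ • u := by
  ext i
  fin_cases i <;>
    simp [cross3, crossProduct, PiLp.inner_apply, Fin.sum_univ_three, RCLike.inner_apply,
      EuclideanSpace.real_norm_sq_eq] <;>
    ring

lemma inner_cross3_self (a b : E3) :
    ⟪cross3 a b, cross3 a b⟫ = ⟪a, a⟫ * ⟪b, b⟫ - ⟪a, b⟫ ^ 2 := by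
  simp [cross3, crossProduct, PiLp.inner_apply, Fin.sum_univ_three, RCLike.inner_apply,
    EuclideanSpace.real_norm_sq_eq]
  ring

def cross3CLM : E3 →L[ℝ] E3 →L[ℝ] E3 :=
  LinearMap.toContinuousLinearMap <| LinearMap.toContinuousLinearMap.toLinearMap ∘ₗ
    LinearMap.mk₂ ℝ cross3 cross3_add_left cross3_smul_left cross3_add_right cross3_smul_right

theorem HasDerivAt.cross3 {f g : ℝ → E3} {f' g' : E3} {t : ℝ} (hf : HasDerivAt f f' t)
    (hg : HasDerivAt g g' t) :
    HasDerivAt (fun s => cross3 (f s) (g s)) (cross3 (f t) g' + cross3 f' (g t)) t :=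
  cross3CLM.hasDerivAt_of_bilinear (fun _ => hf) (fun _ => hg)

def rodrigues (m : E3) (θ : ℝ) (y : E3) : E3 :=
  ⟪m, y⟫ • m + Real.cos θ • cross3 (cross3 m y) m + Real.sin θ • cross3 m y

lemma Rn_eq_rodrigues : Rn = rodrigues := rfl

lemma inner_smul_add_cross3_cross3 {m : E3} (hm : ⟪m, m⟫ = 1) (y : E3) :
    ⟪m, y⟫ • m + cross3 (cross3 m y) m = y := by
  rw [cross3_cross3_self, hm, one_smul, add_sub_cancel]

lemma rodrigues_zero {m : E3} (hm : ⟪m, m⟫ = 1) (y : E3) : rodrigues m 0 y = y := by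
  simp only [rodrigues, Real.cos_zero, Real.sin_zero, one_smul, zero_smul, add_zero]
  exact inner_smul_add_cross3_cross3 hm y

lemma rodrigues_neg (m : E3) (θ : ℝ) (y : E3) : rodrigues (-m) (-θ) y = rodrigues m θ y := by
  simp [rodrigues, cross3_neg_left, cross3_neg_right]

lemma hasDerivAt_rodrigues {m : E3} (hm : ⟪m, m⟫ = 1) (ω : ℝ) {y : ℝ → E3} {y' : E3}
    (hy : HasDerivAt y y' 0) :
    HasDerivAt (fun s => rodrigues m (s * ω) (y s)) (ω • cross3 m (y 0) + y') 0 := by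
  have hθ : HasDerivAt (fun s : ℝ => s * ω) ω 0 := hasDerivAt_mul_const ω
  have hm' := hasDerivAt_const (0 : ℝ) m
  refine ((((hm'.inner ℝ hy).smul hm').add (hθ.cos.smul ((hm'.cross3 hy).cross3 hm'))).add
    (hθ.sin.smul (hm'.cross3 hy))).congr_deriv ?_
  simp only [zero_mul, Real.cos_zero, Real.sin_zero, neg_zero, one_smul, zero_smul, smul_zero,
    inner_zero_left, add_zero, zero_add, cross3_zero_left, cross3_zero_right, one_mul]
  rw [inner_smul_add_cross3_cross3 hm, add_comm]

def tangentAxis (n τ : E3) : E3 := cross3 n (‖τ‖⁻¹ • τ)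

lemma RT_of_ne_zero (n : E3) {τ : E3} (hτ : τ ≠ 0) (y : E3) :
    RT n τ y = rodrigues (tangentAxis n τ) ‖τ‖ y := by
  simp [RT, hτ, rodrigues, tangentAxis]

lemma tangentAxis_neg (n τ : E3) : tangentAxis n (-τ) = -tangentAxis n τ := by
  rw [tangentAxis, norm_neg, smul_neg, cross3_neg_right, tangentAxis]

lemma tangentAxis_smul_of_pos (n τ : E3) {s : ℝ} (hs : 0 < s) :
    tangentAxis n (s • τ) = tangentAxis n τ := by
  rw [tangentAxis, norm_smul, Real.norm_of_nonneg hs.le, smul_smul, mul_inv_rev, mul_assoc,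
    inv_mul_cancel₀ hs.ne', mul_one, tangentAxis]

lemma tangentAxis_smul_of_neg (n τ : E3) {s : ℝ} (hs : s < 0) :
    tangentAxis n (s • τ) = -tangentAxis n τ := by
  rw [← neg_neg s, neg_smul, ← smul_neg, tangentAxis_smul_of_pos n _ (neg_pos.2 hs),
    tangentAxis_neg]

lemma inner_tangentAxis_self {n τ : E3} (hn : ‖n‖ = 1) (hτ : ⟪τ, n⟫ = 0) (hτ0 : τ ≠ 0) :
    ⟪tangentAxis n τ, tangentAxis n τ⟫ = 1 := by
  rw [tangentAxis, inner_cross3_self, real_inner_self_eq_norm_sq, real_inner_self_eq_norm_sq,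
    norm_smul, norm_inv, norm_norm, inv_mul_cancel₀ (norm_ne_zero_iff.2 hτ0), hn,
    real_inner_smul_right, real_inner_comm, hτ]
  norm_num

lemma RT_smul {n τ : E3} (hu : ⟪tangentAxis n τ, tangentAxis n τ⟫ = 1) (s : ℝ) (y : E3) :
    RT n (s • τ) y = rodrigues (tangentAxis n τ) (s * ‖τ‖) y := by
  have hτ : τ ≠ 0 := by rintro rfl; simp [tangentAxis, cross3_zero_right] at hu
  rcases lt_trichotomy s 0 with hs | rfl | hs
  -- for `s < 0` both the axis and the angle of `R_T(sτ)` change sign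
  · rw [RT_of_ne_zero n (smul_ne_zero hs.ne hτ), tangentAxis_smul_of_neg n τ hs, norm_smul,
      Real.norm_of_nonpos hs.le, neg_mul, rodrigues_neg]
  · simp [RT, rodrigues_zero hu]
  · rw [RT_of_ne_zero n (smul_ne_zero hs.ne' hτ), tangentAxis_smul_of_pos n τ hs, norm_smul,
      Real.norm_of_nonneg hs.le]

lemma smul_cross3_tangentAxis (n : E3) {τ : E3} (hτ : τ ≠ 0) (x : E3) :
    ‖τ‖ • cross3 (tangentAxis n τ) x = cross3 (cross3 n τ) x := by
  rw [tangentAxis, cross3_smul_right, cross3_smul_left, smul_smul,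
    mul_inv_cancel₀ (norm_ne_zero_iff.2 hτ), one_smul]

/-- the map `s ↦ φ(sq, x) = R_T(sτ)(R_n(sα)x)` is differentiable at
`s = 0` with derivative `(n × τ) × x + α (n × x)`. -/
theorem particle_motion_deriv (n : E3) (hn : ‖n‖ = 1) (α : ℝ) (τ : E3)
    (hτ : ⟪τ, n⟫ = 0) (x : E3) :
    HasDerivAt (fun s : ℝ => phi n (s * α, s • τ) x)
      (cross3 (cross3 n τ) x + α • cross3 n x) 0 := by
  have hnn : ⟪n, n⟫ = 1 := by rw [real_inner_self_eq_norm_sq, hn, one_pow]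
  have hRn := hasDerivAt_rodrigues hnn α (hasDerivAt_const 0 x)
  rcases eq_or_ne τ 0 with rfl | hτ0
  · simpa [phi, RT, Rn_eq_rodrigues, cross3_zero_left, cross3_zero_right] using hRn
  · have hu := inner_tangentAxis_self hn hτ hτ0
    have h := hasDerivAt_rodrigues hu ‖τ‖ hRn
    rw [zero_mul, rodrigues_zero hnn, add_zero, smul_cross3_tangentAxis n hτ0] at h
    simpa only [phi, RT_smul hu, Rn_eq_rodrigues] using h
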